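/- arXiv:1202.2980 — 4 statements merged into one kernel-verified Lean document; each statement's English description precedes it below -/
import Mathlib

section
/- If σ is continuous on some interval (1−δ, 1] with δ > 0 and σ(1)² ≠ 1, then lim_{t↑1} (V(t) − t) · ∫₀ᵗ 1/(V(s)−s) ds = 0. -/
/-!
Near `1`, `V t - t = ∫ s in t..1, (1 - σ s ^ 2)` and the integrand is continuous with nonzero
value `1 - σ 1 ^ 2` at `1`, which must be positive because `V t > t`. Hence `V t - t` is
comparable to `1 - t`, so `∫₀ᵗ 1 / (V s - s) ds = O(log (1 / (1 - t)))`, and the product is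
`O((1 - t) log (1 / (1 - t))) → 0`.
-/

open Real Filter Topology Set MeasureTheory

section LogBound

variable {f : ℝ → ℝ} {a b t₀ t m : ℝ}

lemma integral_inv_sub_eq_log_sub_log (ht : t₀ ≤ t) (htb : t < b) :
    ∫ s in t₀..t, (b - s)⁻¹ = log (b - t₀) - log (b - t) := by
  rw [intervalIntegral.integral_comp_sub_left (fun x => x⁻¹),
    integral_inv_of_pos (by linarith) (by linarith), log_div (by linarith) (by linarith)]

lemma pos_of_mul_sub_le (hm : 0 < m) (htb : t < b) (hlow : ∀ s ∈ Icc t₀ t, m * (b - s) ≤ f s) :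
    ∀ s ∈ Icc t₀ t, 0 < f s := fun s hs =>
  (mul_pos hm (by linarith [hs.2])).trans_le (hlow s hs)

lemma intervalIntegrable_one_div (hm : 0 < m) (ht : t₀ ≤ t) (htb : t < b)
    (hf : ContinuousOn f (Icc t₀ t)) (hlow : ∀ s ∈ Icc t₀ t, m * (b - s) ≤ f s) :
    IntervalIntegrable (fun s => 1 / f s) volume t₀ t := by
  refine ContinuousOn.intervalIntegrable ?_
  rw [uIcc_of_le ht]
  exact continuousOn_const.div hf fun s hs => (pos_of_mul_sub_le hm htb hlow s hs).ne'

lemma integral_one_div_le_log (hm : 0 < m) (ht : t₀ ≤ t) (htb : t < b)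
    (hf : ContinuousOn f (Icc t₀ t)) (hlow : ∀ s ∈ Icc t₀ t, m * (b - s) ≤ f s) :
    ∫ s in t₀..t, 1 / f s ≤ m⁻¹ * (log (b - t₀) - log (b - t)) := by
  have hsb : ∀ s ∈ Icc t₀ t, 0 < b - s := fun s hs => by linarith [hs.2]
  have hint : IntervalIntegrable (fun s => m⁻¹ * (b - s)⁻¹) volume t₀ t := by
    refine ContinuousOn.intervalIntegrable ?_
    rw [uIcc_of_le ht]
    exact continuousOn_const.mul <| (continuousOn_const.sub continuousOn_id).inv₀
      fun s hs => (hsb s hs).ne'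
  calc ∫ s in t₀..t, 1 / f s ≤ ∫ s in t₀..t, m⁻¹ * (b - s)⁻¹ :=
        intervalIntegral.integral_mono_on ht (intervalIntegrable_one_div hm ht htb hf hlow) hint
          fun s hs => by
            rw [← mul_inv, ← one_div]
            exact one_div_le_one_div_of_le (mul_pos hm (hsb s hs)) (hlow s hs)
    _ = m⁻¹ * (log (b - t₀) - log (b - t)) := by
        rw [intervalIntegral.integral_const_mul, integral_inv_sub_eq_log_sub_log ht htb]

/-- Also true when `1 / f` is not integrable on `[a, t₀]`: then both integrals from `a` vanish. -/
lemma abs_integral_one_div_le (hm : 0 < m) (ht : t₀ ≤ t) (htb : t < b)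
    (hf : ContinuousOn f (Icc t₀ t)) (hlow : ∀ s ∈ Icc t₀ t, m * (b - s) ≤ f s) :
    |∫ s in a..t, 1 / f s| ≤ |∫ s in a..t₀, 1 / f s| + m⁻¹ * (log (b - t₀) - log (b - t)) := by
  have hint := intervalIntegrable_one_div hm ht htb hf hlow
  have hle := integral_one_div_le_log hm ht htb hf hlow
  have hnonneg : 0 ≤ ∫ s in t₀..t, 1 / f s := intervalIntegral.integral_nonneg ht fun s hs =>
    (one_div_pos.2 (pos_of_mul_sub_le hm htb hlow s hs)).le
  by_cases hI : IntervalIntegrable (fun s => 1 / f s) volume a t₀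
  · rw [← intervalIntegral.integral_add_adjacent_intervals hI hint]
    calc _ ≤ |∫ s in a..t₀, 1 / f s| + |∫ s in t₀..t, 1 / f s| := abs_add_le _ _
      _ ≤ _ := by rw [abs_of_nonneg hnonneg]; linarith
  · rw [intervalIntegral.integral_undef hI,
      intervalIntegral.integral_undef fun h => hI (h.trans hint.symm), abs_zero, zero_add]
    linarith

end LogBound

theorem tendsto_mul_integral_one_div_nhdsLT {f : ℝ → ℝ} {a b t₁ m M : ℝ} (ht₁ : t₁ < b)
    (hm : 0 < m) (hf : ContinuousOn f (Ioo t₁ b))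
    (hbound : ∀ᶠ t in 𝓝[<] b, m * (b - t) ≤ f t ∧ f t ≤ M * (b - t)) :
    Tendsto (fun t => f t * ∫ s in a..t, 1 / f s) (𝓝[<] b) (𝓝 0) := by
  obtain ⟨t₀, ht₀, hsub⟩ :=
    mem_nhdsLT_iff_exists_Ico_subset.1 (hbound.and (Ioo_mem_nhdsLT ht₁))
  set C := |∫ s in a..t₀, 1 / f s|
  have hlim : Tendsto (fun t => M * ((b - t) * (C + m⁻¹ * log (b - t₀)) -
      m⁻¹ * ((b - t) * log (b - t)))) (𝓝[<] b) (𝓝 0) := by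
    have hcont : Continuous fun t => M * ((b - t) * (C + m⁻¹ * log (b - t₀)) -
        m⁻¹ * ((b - t) * log (b - t))) := by
      have := continuous_mul_log.comp (continuous_sub_left b)
      fun_prop
    simpa using (hcont.tendsto b).mono_left nhdsWithin_le_nhds
  refine squeeze_zero_norm' ?_ hlim
  filter_upwards [Ico_mem_nhdsLT ht₀] with t ht
  have hIcc : Icc t₀ t ⊆ Ico t₀ b := Icc_subset_Ico_right ht.2
  have hlow : ∀ s ∈ Icc t₀ t, m * (b - s) ≤ f s := fun s hs => (hsub (hIcc hs)).1.1
  have hcont : ContinuousOn f (Icc t₀ t) := hf.mono fun s hs => (hsub (hIcc hs)).2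
  obtain ⟨⟨-, hfM⟩, -⟩ := hsub ht
  have hpos : 0 < f t := pos_of_mul_sub_le hm ht.2 hlow t ⟨ht.1, le_rfl⟩
  calc ‖f t * ∫ s in a..t, 1 / f s‖
      ≤ M * (b - t) * (C + m⁻¹ * (log (b - t₀) - log (b - t))) := by
        rw [norm_mul, Real.norm_eq_abs, Real.norm_eq_abs, abs_of_pos hpos]
        exact mul_le_mul hfM (abs_integral_one_div_le hm ht.1 ht.2 hcont hlow) (abs_nonneg _)
          (hpos.le.trans hfM)
    _ = _ := by ring

section IntegralToEndpoint

variable {h : ℝ → ℝ} {t₁ b : ℝ}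

lemma intervalIntegrable_of_continuousOn_Ioc (hh : ContinuousOn h (Ioc t₁ b)) {t : ℝ}
    (ht₁ : t₁ < t) (htb : t ≤ b) : IntervalIntegrable h volume t b := by
  refine ContinuousOn.intervalIntegrable (hh.mono ?_)
  rw [uIcc_of_le htb]
  exact Icc_subset_Ioc_left ht₁

lemma continuousOn_integral_left (hh : ContinuousOn h (Ioc t₁ b)) :
    ContinuousOn (fun t => ∫ s in t..b, h s) (Ioo t₁ b) := by
  intro t ht
  have hderiv := intervalIntegral.integral_hasDerivAt_left
    (intervalIntegrable_of_continuousOn_Ioc hh ht.1 ht.2.le)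
    ((hh.mono Ioo_subset_Ioc_self).stronglyMeasurableAtFilter isOpen_Ioo t ht)
    (hh.continuousAt (Ioc_mem_nhds ht.1 ht.2))
  exact hderiv.continuousAt.continuousWithinAt

lemma eventually_abs_integral_sub_mul_le (ht₁ : t₁ < b) (hh : ContinuousOn h (Ioc t₁ b))
    {ε : ℝ} (hε : 0 < ε) :
    ∀ᶠ t in 𝓝[<] b, |(∫ s in t..b, h s) - h b * (b - t)| ≤ ε * (b - t) := by
  have hwithin : ContinuousWithinAt h (Iic b) b :=
    (hh b ⟨ht₁, le_rfl⟩).mono_of_mem_nhdsWithin (Ioc_mem_nhdsLE ht₁)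
  obtain ⟨l, hl, hsub⟩ := mem_nhdsLE_iff_exists_Ioc_subset.1
    ((hwithin.eventually (eventually_abs_sub_lt (h b) hε)).and (Ioc_mem_nhdsLE ht₁))
  filter_upwards [Ioo_mem_nhdsLT hl] with t ht
  have hIoc : Ioc t b ⊆ Ioc l b := Ioc_subset_Ioc_left ht.1.le
  have hint : IntervalIntegrable h volume t b :=
    intervalIntegrable_of_continuousOn_Ioc hh (hsub ⟨ht.1, ht.2.le⟩).2.1 ht.2.le
  have hdiff : (∫ s in t..b, h s) - h b * (b - t) = ∫ s in t..b, (h s - h b) := by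
    rw [intervalIntegral.integral_sub hint intervalIntegrable_const,
      intervalIntegral.integral_const, smul_eq_mul, mul_comm]
  rw [hdiff, ← Real.norm_eq_abs, ← abs_of_pos (sub_pos.2 ht.2)]
  refine intervalIntegral.norm_integral_le_of_norm_le_const fun s hs => ?_
  rw [uIoc_of_le ht.2.le] at hs
  exact (hsub (hIoc hs)).1.le

lemma pos_of_eventually_integral_pos (ht₁ : t₁ < b) (hh : ContinuousOn h (Ioc t₁ b))
    (hb : h b ≠ 0) (hpos : ∀ᶠ t in 𝓝[<] b, 0 < ∫ s in t..b, h s) : 0 < h b := by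
  by_contra! hneg
  have hlt : h b < 0 := lt_of_le_of_ne hneg hb
  obtain ⟨t, hI, happrox, ht⟩ := (hpos.and ((eventually_abs_integral_sub_mul_le ht₁ hh
    (half_pos (neg_pos.2 hlt))).and self_mem_nhdsWithin)).exists
  have htb : 0 < b - t := sub_pos.2 ht
  nlinarith [le_abs_self ((∫ s in t..b, h s) - h b * (b - t))]

lemma eventually_mul_sub_le_integral_le_mul_sub (ht₁ : t₁ < b) (hh : ContinuousOn h (Ioc t₁ b))
    (hb : 0 < h b) :
    ∀ᶠ t in 𝓝[<] b,
      h b / 2 * (b - t) ≤ ∫ s in t..b, h s ∧ ∫ s in t..b, h s ≤ 3 * h b / 2 * (b - t) := by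
  filter_upwards [eventually_abs_integral_sub_mul_le ht₁ hh (half_pos hb)] with t ht
  constructor <;> linarith [abs_le.1 ht]

end IntegralToEndpoint

theorem tendsto_mul_integral_one_div_of_eq_integral {f h : ℝ → ℝ} {a b t₁ : ℝ} (ht₁ : t₁ < b)
    (hh : ContinuousOn h (Ioc t₁ b)) (hb : h b ≠ 0)
    (hfh : ∀ t ∈ Ioc t₁ b, f t = ∫ s in t..b, h s) (hfpos : ∀ t ∈ Ioo t₁ b, 0 < f t) :
    Tendsto (fun t => f t * ∫ s in a..t, 1 / f s) (𝓝[<] b) (𝓝 0) := by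
  have hfh' : ∀ᶠ t in 𝓝[<] b, f t = ∫ s in t..b, h s :=
    eventually_of_mem (Ioo_mem_nhdsLT ht₁) fun t ht => hfh t (Ioo_subset_Ioc_self ht)
  have hpos : 0 < h b := pos_of_eventually_integral_pos ht₁ hh hb <| by
    filter_upwards [hfh', Ioo_mem_nhdsLT ht₁] with t heq ht
    exact heq ▸ hfpos t ht
  refine tendsto_mul_integral_one_div_nhdsLT (M := 3 * h b / 2) ht₁ (half_pos hpos)
    ((continuousOn_integral_left hh).congr fun t ht => hfh t (Ioo_subset_Ioc_self ht)) ?_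
  filter_upwards [hfh', eventually_mul_sub_le_integral_le_mul_sub ht₁ hh hpos] with t heq hbound
  rwa [heq]

section Setting

variable {c : ℝ} {g V : ℝ → ℝ}

lemma sub_eq_integral_one_sub (hV : ∀ t, V t = c + ∫ s in (0:ℝ)..t, g s) (hV1 : V 1 = 1)
    (hg : IntervalIntegrable g volume 0 1) {t : ℝ} (ht : t ∈ Icc (0:ℝ) 1) :
    V t - t = ∫ s in t..1, (1 - g s) := by
  have hg' : IntervalIntegrable g volume t 1 := hg.mono_set <| by
    rw [uIcc_of_le ht.2, uIcc_of_le zero_le_one]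
    exact Icc_subset_Icc_left ht.1
  have hsplit := intervalIntegral.integral_add_adjacent_intervals (hg.trans hg'.symm) hg'
  rw [intervalIntegral.integral_sub intervalIntegrable_const hg', intervalIntegral.integral_const,
    smul_eq_mul, mul_one]
  linarith [hV t, hV 1]

lemma eq_one_of_not_intervalIntegrable (hV : ∀ t, V t = c + ∫ s in (0:ℝ)..t, g s) (hV1 : V 1 = 1)
    (hg : ¬ IntervalIntegrable g volume 0 1) {t : ℝ} (hg' : IntervalIntegrable g volume t 1) :
    V t = 1 := by
  rw [← hV1, hV, hV, intervalIntegral.integral_undef hg,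
    intervalIntegral.integral_undef fun h => hg (h.trans hg')]

end Setting

theorem stmt_3_general
    (c : ℝ)
    (σ : ℝ → ℝ)
    (V : ℝ → ℝ) (hV : ∀ t, V t = c + ∫ s in (0:ℝ)..t, (σ s) ^ 2)
    (hVt : ∀ t ∈ Ico (0:ℝ) 1, t < V t) (hV1 : V 1 = 1)
    (δ : ℝ) (hδ : 0 < δ) (hσcont : ContinuousOn σ (Ioc (1 - δ) 1))
    (hσ1 : (σ 1) ^ 2 ≠ 1) :
    Tendsto (fun t => (V t - t) * ∫ s in (0:ℝ)..t, 1 / (V s - s))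
      (𝓝[<] (1:ℝ)) (𝓝 0) := by
  set t₁ := max 0 (1 - δ)
  have ht₁ : t₁ < 1 := max_lt one_pos (by linarith)
  have hσ2 : ContinuousOn (fun s => σ s ^ 2) (Ioc t₁ 1) :=
    (hσcont.mono (Ioc_subset_Ioc_left (le_max_right _ _))).pow 2
  have hpos : ∀ t ∈ Ioo t₁ 1, 0 < V t - t := fun t ht =>
    sub_pos.2 (hVt t ⟨(le_max_left _ _).trans ht.1.le, ht.2⟩)
  by_cases hint : IntervalIntegrable (fun s => σ s ^ 2) volume 0 1
  · exact tendsto_mul_integral_one_div_of_eq_integral ht₁ (continuousOn_const.sub hσ2)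
      (sub_ne_zero.2 hσ1.symm)
      (fun t ht => sub_eq_integral_one_sub hV hV1 hint ⟨(le_max_left _ _).trans ht.1.le, ht.2⟩)
      hpos
  · -- the junk value `0` of the non-integrable integrals makes `V` constant near `1`
    refine tendsto_mul_integral_one_div_of_eq_integral ht₁ continuousOn_const one_ne_zero
      (fun t ht => ?_) hpos
    rw [eq_one_of_not_intervalIntegrable hV hV1 hint
        (intervalIntegrable_of_continuousOn_Ioc hσ2 ht.1 ht.2), intervalIntegral.integral_const,
      smul_eq_mul, mul_one]

/-- If `σ` is continuous on `(1-δ, 1]` for some `δ > 0` and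
`σ(1)² ≠ 1`, then `lim_{t↑1} (V(t) - t) · ∫₀ᵗ 1/(V(s)-s) ds = 0`. -/
theorem stmt_3
    (c : ℝ) (hc0 : 0 < c) (hc1 : c ≤ 1)
    (σ : ℝ → ℝ) (hσmeas : Measurable σ) (hσ0 : ∀ t ∈ Icc (0:ℝ) 1, 0 ≤ σ t)
    (V : ℝ → ℝ) (hV : ∀ t, V t = c + ∫ s in (0:ℝ)..t, (σ s) ^ 2)
    (hVt : ∀ t ∈ Ico (0:ℝ) 1, t < V t) (hV1 : V 1 = 1)
    (δ : ℝ) (hδ : 0 < δ) (hσcont : ContinuousOn σ (Ioc (1 - δ) 1))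
    (hσ1 : (σ 1) ^ 2 ≠ 1) :
    Tendsto (fun t => (V t - t) * ∫ s in (0:ℝ)..t, 1 / (V s - s))
      (𝓝[<] (1:ℝ)) (𝓝 0) :=
  stmt_3_general c σ V hV hVt hV1 δ hδ hσcont hσ1
end

section
/- Let a : [0,1] × ℝ → ℝ be of class C^{1,2} with a(t,z) ≥ ε > 0 for all (t,z), and suppose a satisfies the nonlinear PDE a_t(t,z) + (a(t,z)²/2) a_zz(t,z) = 0 on [0,1] × ℝ. Then for every (t,x) ∈ [0,1] × ℝ, −∫₀ˣ (a_t(t,y)/a(t,y)²) dy − (1/2) a_z(t,x) = −(1/2) a_z(t,0). In other words, the function b(t,x) := A_t(t,x) − (1/2) a_z(t,x), where A(t,x) := ∫₀ˣ dy/a(t,y) and A_t denotes its partial derivative in t, is constant in x and equals −(1/2) a_z(t,0). -/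
open Real Filter Topology Set MeasureTheory

/-! The PDE says exactly that `a_t / a² = -(1/2) a_zz`, so `∫₀ˣ a_t / a²` is `-(1/2)` times the
integral of `a_zz`, which by the fundamental theorem of calculus is `a_z(t,x) - a_z(t,0)`. -/

lemma div_sq_eq_neg_half_mul_of_add_sq_div_two_mul_eq_zero {u v w : ℝ} (hv : v ≠ 0)
    (h : u + v ^ 2 / 2 * w = 0) : u / v ^ 2 = -(1 / 2) * w := by
  rw [div_eq_iff (pow_ne_zero 2 hv)]
  linear_combination h

lemma ContinuousOn.continuous_slice_of_prod_univ {α β γ : Type*} [TopologicalSpace α]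
    [TopologicalSpace β] [TopologicalSpace γ] {f : α → β → γ} {s : Set α}
    (hf : ContinuousOn (fun p : α × β => f p.1 p.2) (s ×ˢ univ)) {t : α} (ht : t ∈ s) :
    Continuous (f t) :=
  continuousOn_univ.mp <| hf.comp (Continuous.prodMk_right t).continuousOn
    fun _ _ => ⟨ht, mem_univ _⟩

lemma neg_integral_div_sq_sub_half_mul_eq {u v g g' : ℝ → ℝ}
    (hv : ∀ y, v y ≠ 0) (hg : ∀ y, HasDerivAt g (g' y) y) (hg' : Continuous g')
    (h : ∀ y, u y + v y ^ 2 / 2 * g' y = 0) (x : ℝ) :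
    -(∫ y in (0:ℝ)..x, u y / v y ^ 2) - (1 / 2) * g x = -(1 / 2) * g 0 := by
  have hint : (∫ y in (0:ℝ)..x, u y / v y ^ 2) = ∫ y in (0:ℝ)..x, -(1 / 2) * g' y :=
    intervalIntegral.integral_congr fun y _ =>
      div_sq_eq_neg_half_mul_of_add_sq_div_two_mul_eq_zero (hv y) (h y)
  have hftc : (∫ y in (0:ℝ)..x, g' y) = g x - g 0 :=
    intervalIntegral.integral_eq_sub_of_hasDerivAt (fun y _ => hg y) (hg'.intervalIntegrable 0 x)
  rw [hint, intervalIntegral.integral_const_mul, hftc]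
  ring

theorem stmt_6_general
    (a at' az azz : ℝ → ℝ → ℝ) (ε : ℝ) (hε : 0 < ε)
    (ha_lb : ∀ t ∈ Icc (0:ℝ) 1, ∀ z : ℝ, ε ≤ a t z)
    (hazz : ∀ t ∈ Icc (0:ℝ) 1, ∀ z : ℝ, HasDerivAt (fun y => az t y) (azz t z) z)
    (hazz_cont : ContinuousOn (fun p : ℝ × ℝ => azz p.1 p.2) (Icc (0:ℝ) 1 ×ˢ univ))
    (hpde : ∀ t ∈ Icc (0:ℝ) 1, ∀ z : ℝ, at' t z + (a t z) ^ 2 / 2 * azz t z = 0) :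
    ∀ t ∈ Icc (0:ℝ) 1, ∀ x : ℝ,
      -(∫ y in (0:ℝ)..x, at' t y / (a t y) ^ 2) - (1 / 2) * az t x
        = -(1 / 2) * az t 0 := fun t ht =>
  neg_integral_div_sq_sub_half_mul_eq (fun y => (hε.trans_le (ha_lb t ht y)).ne')
    (hazz t ht) (hazz_cont.continuous_slice_of_prod_univ ht) (hpde t ht)

/-- If `a` is `C^{1,2}` on `[0,1] × ℝ`, bounded below by `ε > 0`, and
satisfies `a_t + (a²/2) a_zz = 0`, then for every `(t,x) ∈ [0,1] × ℝ`,
`-∫₀ˣ a_t(t,y)/a(t,y)² dy - (1/2) a_z(t,x) = -(1/2) a_z(t,0)`, i.e. the function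
`b(t,x) = A_t(t,x) - (1/2) a_z(t,x)` is constant in `x`. -/
theorem stmt_6
    (a at' az azz : ℝ → ℝ → ℝ) (ε : ℝ) (hε : 0 < ε)
    (ha_lb : ∀ t ∈ Icc (0:ℝ) 1, ∀ z : ℝ, ε ≤ a t z)
    (hat : ∀ t ∈ Icc (0:ℝ) 1, ∀ z : ℝ, HasDerivAt (fun s => a s z) (at' t z) t)
    (haz : ∀ t ∈ Icc (0:ℝ) 1, ∀ z : ℝ, HasDerivAt (fun y => a t y) (az t z) z)
    (hazz : ∀ t ∈ Icc (0:ℝ) 1, ∀ z : ℝ, HasDerivAt (fun y => az t y) (azz t z) z)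
    (ha_cont : ContinuousOn (fun p : ℝ × ℝ => a p.1 p.2) (Icc (0:ℝ) 1 ×ˢ univ))
    (hat_cont : ContinuousOn (fun p : ℝ × ℝ => at' p.1 p.2) (Icc (0:ℝ) 1 ×ˢ univ))
    (haz_cont : ContinuousOn (fun p : ℝ × ℝ => az p.1 p.2) (Icc (0:ℝ) 1 ×ˢ univ))
    (hazz_cont : ContinuousOn (fun p : ℝ × ℝ => azz p.1 p.2) (Icc (0:ℝ) 1 ×ˢ univ))
    (hpde : ∀ t ∈ Icc (0:ℝ) 1, ∀ z : ℝ, at' t z + (a t z) ^ 2 / 2 * azz t z = 0) :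
    ∀ t ∈ Icc (0:ℝ) 1, ∀ x : ℝ,
      -(∫ y in (0:ℝ)..x, at' t y / (a t y) ^ 2) - (1 / 2) * az t x
        = -(1 / 2) * az t 0 :=
  stmt_6_general a at' az azz ε hε ha_lb hazz hazz_cont hpde
end

section
/- Let k₁, k₂, k₃ > 0 and define a(t,z) := √(k₁ (z+k₂)² + k₃ e^{−k₁ t}) for (t,z) ∈ [0,1] × ℝ. Then a is of class C^{1,2}, satisfies the nonlinear PDE a_t(t,z) + (a(t,z)²/2) a_zz(t,z) = 0 on [0,1] × ℝ, and is uniformly bounded away from zero: a(t,z) ≥ √(k₃ e^{−k₁}) for all (t,z) ∈ [0,1] × ℝ. -/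
open Real Set

/-!
Write `u = k₁ (z+k₂)² + c` with `c = k₃ e^{-k₁ t} > 0`, so `a = √u` and `u > 0` everywhere;
hence `a` is smooth. In `z`, `a_z = k₁ (z+k₂) / a` and `a_zz = k₁ (a² - k₁ (z+k₂)²) / a³ = k₁ c / a³`,
while `a_t = c' / (2a) = -k₁ c / (2a)`. Thus `(a²/2) a_zz = k₁ c / (2a) = -a_t`.
The lower bound holds because `c` decreases in `t`.
-/

section SqrtQuadratic

variable {k m c : ℝ}

lemma hasDerivAt_sqrt_mul_sq_add {y : ℝ} (h : 0 < k * (y + m) ^ 2 + c) :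
    HasDerivAt (fun y => √(k * (y + m) ^ 2 + c)) (k * (y + m) / √(k * (y + m) ^ 2 + c)) y := by
  have hquad : HasDerivAt (fun y => k * (y + m) ^ 2 + c) (k * (2 * (y + m))) y := by
    simpa using ((((hasDerivAt_id y).add_const m).fun_pow 2).const_mul k).add_const c
  convert hquad.sqrt h.ne' using 1
  field_simp

lemma deriv_sqrt_mul_sq_add (hk : 0 ≤ k) (hc : 0 < c) :
    deriv (fun y => √(k * (y + m) ^ 2 + c)) = fun y => k * (y + m) / √(k * (y + m) ^ 2 + c) :=
  funext fun _ => (hasDerivAt_sqrt_mul_sq_add (by positivity)).deriv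

lemma deriv_deriv_sqrt_mul_sq_add (hk : 0 ≤ k) (hc : 0 < c) (z : ℝ) :
    deriv (deriv fun y => √(k * (y + m) ^ 2 + c)) z = k * c / √(k * (z + m) ^ 2 + c) ^ 3 := by
  have hu : 0 < k * (z + m) ^ 2 + c := by positivity
  have hroot : 0 < √(k * (z + m) ^ 2 + c) := sqrt_pos.2 hu
  have hnum : HasDerivAt (fun y => k * (y + m)) k z := by
    simpa using ((hasDerivAt_id z).add_const m).const_mul k
  rw [deriv_sqrt_mul_sq_add hk hc, (hnum.fun_div (hasDerivAt_sqrt_mul_sq_add hu) hroot.ne').deriv]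
  field_simp
  rw [sq_sqrt hu.le]
  ring

end SqrtQuadratic

lemma deriv_sqrt_add_mul_exp {b k₁ k₃ t : ℝ} (h : 0 < b + k₃ * exp (-k₁ * t)) :
    deriv (fun s => √(b + k₃ * exp (-k₁ * s))) t
      = -(k₁ * k₃ * exp (-k₁ * t)) / (2 * √(b + k₃ * exp (-k₁ * t))) := by
  have hlin : HasDerivAt (fun s => -k₁ * s) (-k₁) t := by
    simpa using (hasDerivAt_id t).const_mul (-k₁)
  rw [((hlin.exp.const_mul k₃).const_add b).sqrt h.ne' |>.deriv]
  ring

lemma contDiff_sqrt_mul_sq_add_mul_exp {k₁ k₂ k₃ : ℝ} (hk₁ : 0 ≤ k₁) (hk₃ : 0 < k₃)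
    {n : WithTop ℕ∞} :
    ContDiff ℝ n fun p : ℝ × ℝ => √(k₁ * (p.2 + k₂) ^ 2 + k₃ * exp (-k₁ * p.1)) := by
  refine ContDiff.sqrt (by fun_prop) fun p => ?_
  positivity

theorem stmt_7_general
    (k₁ k₂ k₃ : ℝ) (hk₁ : 0 < k₁) (hk₃ : 0 < k₃)
    (a : ℝ → ℝ → ℝ)
    (ha : ∀ t z, a t z = Real.sqrt (k₁ * (z + k₂) ^ 2 + k₃ * Real.exp (-k₁ * t))) :
    ContDiffOn ℝ 2 (fun p : ℝ × ℝ => a p.1 p.2) (Icc (0:ℝ) 1 ×ˢ (univ : Set ℝ)) ∧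
    (∀ t ∈ Icc (0:ℝ) 1, ∀ z : ℝ,
      deriv (fun s => a s z) t
        + (a t z) ^ 2 / 2 * deriv (deriv (fun y => a t y)) z = 0) ∧
    (∀ t ∈ Icc (0:ℝ) 1, ∀ z : ℝ, Real.sqrt (k₃ * Real.exp (-k₁)) ≤ a t z) := by
  obtain rfl : a = fun t z => √(k₁ * (z + k₂) ^ 2 + k₃ * exp (-k₁ * t)) := funext₂ ha
  refine ⟨(contDiff_sqrt_mul_sq_add_mul_exp hk₁.le hk₃).contDiffOn, fun t _ z => ?_,
    fun t ht z => ?_⟩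
  · have hc : 0 < k₃ * exp (-k₁ * t) := by positivity
    have hroot : 0 < √(k₁ * (z + k₂) ^ 2 + k₃ * exp (-k₁ * t)) := sqrt_pos.2 (by positivity)
    rw [deriv_sqrt_add_mul_exp (by positivity), deriv_deriv_sqrt_mul_sq_add hk₁.le hc]
    field_simp
    ring
  · have hexp : exp (-k₁) ≤ exp (-k₁ * t) := exp_le_exp.2 (by nlinarith [ht.2])
    apply sqrt_le_sqrt
    nlinarith [sq_nonneg (z + k₂)]

/-- For `k₁, k₂, k₃ > 0`, the function
`a(t,z) = √(k₁ (z+k₂)² + k₃ e^{-k₁ t})` is `C^{1,2}` on `[0,1] × ℝ`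
(formalized as joint `C²` smoothness on `[0,1] × ℝ`), satisfies
`a_t + (a²/2) a_zz = 0` there, and `a(t,z) ≥ √(k₃ e^{-k₁})`. -/
theorem stmt_7
    (k₁ k₂ k₃ : ℝ) (hk₁ : 0 < k₁) (hk₂ : 0 < k₂) (hk₃ : 0 < k₃)
    (a : ℝ → ℝ → ℝ)
    (ha : ∀ t z, a t z = Real.sqrt (k₁ * (z + k₂) ^ 2 + k₃ * Real.exp (-k₁ * t))) :
    ContDiffOn ℝ 2 (fun p : ℝ × ℝ => a p.1 p.2) (Icc (0:ℝ) 1 ×ˢ (univ : Set ℝ)) ∧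
    (∀ t ∈ Icc (0:ℝ) 1, ∀ z : ℝ,
      deriv (fun s => a s z) t
        + (a t z) ^ 2 / 2 * deriv (deriv (fun y => a t y)) z = 0) ∧
    (∀ t ∈ Icc (0:ℝ) 1, ∀ z : ℝ, Real.sqrt (k₃ * Real.exp (-k₁)) ≤ a t z) :=
  stmt_7_general k₁ k₂ k₃ hk₁ hk₃ a ha
end

section
/- Let f : ℝ → ℝ be continuously differentiable and strictly increasing, and suppose there exist constants k₁, k₂ > 0 such that |f(y)| ≤ k₁ e^{k₂ |y|} for all y ∈ ℝ. Fix v > 0 and define F(m) := ∫_ℝ f(y) q(v, m, y) dy for m ∈ ℝ. Then F is differentiable with F′(m) = ∫_ℝ f′(y) q(v, m, y) dy > 0 for every m; in particular F is strictly increasing. -/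
/-! Differentiating under the integral sign, with a Gaussian domination on a neighbourhood of `m`
coming from the exponential growth bound, gives `F'(m) = ∫ f(y) ∂ₘq(v,m,y) dy`. An integration by
parts turns this into `∫ f' q`: the boundary terms vanish by Gaussian decay, and `f' q ≥ 0` is
integrable because it is the derivative of a function with limits at `±∞`. The integral is positive
because `f' ≥ 0` cannot vanish almost everywhere without `f` being constant. -/

open Real Filter Topology Set MeasureTheory

/-- The Gaussian heat kernel `q(t,x,y) = (2πt)^{-1/2} exp(-(x-y)²/(2t))`. -/
noncomputable def q (t x y : ℝ) : ℝ :=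
  (Real.sqrt (2 * Real.pi * t))⁻¹ * Real.exp (-(x - y) ^ 2 / (2 * t))

lemma integrable_deriv_of_nonneg_of_tendsto {g g' : ℝ → ℝ} {a b : ℝ}
    (hderiv : ∀ x, HasDerivAt g (g' x) x) (hg' : ∀ x, 0 ≤ g' x)
    (hbot : Tendsto g atBot (𝓝 a)) (htop : Tendsto g atTop (𝓝 b)) : Integrable g' := by
  have hcont : Continuous g := continuous_iff_continuousAt.2 fun x => (hderiv x).continuousAt
  have hloc : ∀ s t, IntegrableOn g' (Ioc s t) := fun s t =>
    intervalIntegral.integrableOn_deriv_of_nonneg hcont.continuousOn (fun x _ => hderiv x)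
      fun x _ => hg' x
  refine integrable_of_intervalIntegral_norm_tendsto (b - a) (fun i => hloc (-i) i)
    tendsto_neg_atTop_atBot tendsto_id ?_
  have hFTC : ∀ i, ∫ x in -i..i, ‖g' x‖ = g i - g (-i) := fun i => by
    simp_rw [Real.norm_of_nonneg (hg' _)]
    exact intervalIntegral.integral_eq_sub_of_hasDerivAt (fun x _ => hderiv x) ⟨hloc _ _, hloc _ _⟩
  simp_rw [hFTC]
  exact htop.sub (hbot.comp tendsto_neg_atTop_atBot)

lemma q_pos {v : ℝ} (hv : 0 < v) (x y : ℝ) : 0 < q v x y := by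
  unfold q; positivity

lemma continuous_q (v x : ℝ) : Continuous (q v x) := by
  unfold q; fun_prop

lemma hasDerivAt_q_fst (v x y : ℝ) :
    HasDerivAt (fun x => q v x y) ((y - x) / v * q v x y) x := by
  have h : HasDerivAt (fun x => -(x - y) ^ 2 / (2 * v)) ((y - x) / v) x := by
    refine ((((hasDerivAt_id' x).sub_const y).fun_pow 2).fun_neg.div_const (2 * v)).congr_deriv ?_
    rcases eq_or_ne v 0 with rfl | hv
    · simp
    · field_simp; ring
  unfold q
  exact (h.exp.const_mul _).congr_deriv (by ring)

lemma q_comm (v x y : ℝ) : q v x y = q v y x := by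
  unfold q; rw [← neg_sub y x, neg_sq]

lemma hasDerivAt_q_snd (v x y : ℝ) :
    HasDerivAt (q v x) ((x - y) / v * q v x y) y := by
  have h := hasDerivAt_q_fst v y x
  rwa [← q_comm, show (fun z => q v z x) = q v x from funext fun z => q_comm v z x] at h

lemma exists_exp_mul_q_le {v : ℝ} (hv : 0 < v) (k R : ℝ) :
    ∃ D, ∀ x y, |x| ≤ R → exp (k * |y|) * q v x y ≤ D * exp (-(8 * v)⁻¹ * y ^ 2) := by
  refine ⟨(√(2 * π * v))⁻¹ * exp (4 * v * k ^ 2 + R ^ 2 / (2 * v)), fun x y hx => ?_⟩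
  -- `8 v k |y| ≤ y² / 2 + 32 v² k²` and `y² ≤ 2 (x - y)² + 2 x²`
  have hexp : k * |y| + -(x - y) ^ 2 / (2 * v) ≤
      4 * v * k ^ 2 + R ^ 2 / (2 * v) + -(8 * v)⁻¹ * y ^ 2 := by
    have hx2 : x ^ 2 ≤ R ^ 2 := sq_le_sq' (abs_le.mp hx).1 (abs_le.mp hx).2
    rw [← sub_nonneg]
    refine nonneg_of_mul_nonneg_left ?_ (by positivity : (0 : ℝ) < 8 * v)
    field_simp
    nlinarith [sq_nonneg (|y| - 8 * v * k), sq_abs y, sq_nonneg (2 * x - y)]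
  unfold q
  calc exp (k * |y|) * ((√(2 * π * v))⁻¹ * exp (-(x - y) ^ 2 / (2 * v)))
      = (√(2 * π * v))⁻¹ * exp (k * |y| + -(x - y) ^ 2 / (2 * v)) := by rw [exp_add]; ring
    _ ≤ (√(2 * π * v))⁻¹ * exp (4 * v * k ^ 2 + R ^ 2 / (2 * v) + -(8 * v)⁻¹ * y ^ 2) := by
        gcongr
    _ = _ := by rw [exp_add]; ring

lemma exists_abs_mul_q_le {v : ℝ} (hv : 0 < v) {g : ℝ → ℝ → ℝ} {C k R : ℝ}
    (hg : ∀ x y, |x| ≤ R → |g x y| ≤ C * exp (k * |y|)) :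
    ∃ D, ∀ x y, |x| ≤ R → |g x y * q v x y| ≤ D * exp (-(8 * v)⁻¹ * y ^ 2) := by
  obtain ⟨D, hD⟩ := exists_exp_mul_q_le hv k R
  refine ⟨|C| * D, fun x y hx => ?_⟩
  have hq := (q_pos hv x y).le
  rw [abs_mul, abs_of_nonneg hq]
  calc |g x y| * q v x y ≤ |C| * exp (k * |y|) * q v x y := by
        gcongr; exact (hg x y hx).trans (by gcongr; exact le_abs_self C)
    _ = |C| * (exp (k * |y|) * q v x y) := by ring
    _ ≤ |C| * (D * exp (-(8 * v)⁻¹ * y ^ 2)) :=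
        mul_le_mul_of_nonneg_left (hD x y hx) (abs_nonneg C)
    _ = _ := by ring

lemma tendsto_mul_q_cocompact {v : ℝ} (hv : 0 < v) {f : ℝ → ℝ} {C k : ℝ}
    (hgrowth : ∀ y, |f y| ≤ C * exp (k * |y|)) (m : ℝ) :
    Tendsto (fun y => f y * q v m y) (cocompact ℝ) (𝓝 0) := by
  obtain ⟨D, hD⟩ := exists_abs_mul_q_le hv (g := fun _ y => f y) (R := |m|) fun _ y _ => hgrowth y
  refine squeeze_zero_norm (fun y => hD m y le_rfl) ?_
  simpa using
    (tendsto_rpow_abs_mul_exp_neg_mul_sq_cocompact (by positivity : 0 < (8 * v)⁻¹) 0).const_mul D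

lemma abs_sub_le_one_add_mul_exp (x y : ℝ) : |y - x| ≤ (1 + |x|) * exp |y| := by
  have h1 : |y| + 1 ≤ exp |y| := add_one_le_exp _
  have h2 : 1 ≤ exp |y| := one_le_exp (abs_nonneg y)
  nlinarith [abs_sub y x, abs_nonneg x]

lemma exists_abs_mul_deriv_q_le {v : ℝ} (hv : 0 < v) {f : ℝ → ℝ} {C k : ℝ}
    (hgrowth : ∀ y, |f y| ≤ C * exp (k * |y|)) (R : ℝ) :
    ∃ D, ∀ x y, |x| ≤ R → |f y * ((y - x) / v * q v x y)| ≤ D * exp (-(8 * v)⁻¹ * y ^ 2) := by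
  simp_rw [← mul_assoc]
  refine exists_abs_mul_q_le hv (C := |C| * (1 + R) / v) (k := k + 1) fun x y hx => ?_
  rw [abs_mul, abs_div, abs_of_pos hv]
  calc |f y| * (|y - x| / v) ≤ (|C| * exp (k * |y|)) * ((1 + R) * exp |y| / v) := by
        gcongr
        · exact (hgrowth y).trans (by gcongr; exact le_abs_self C)
        · exact (abs_sub_le_one_add_mul_exp x y).trans (by gcongr)
    _ = |C| * (1 + R) / v * exp ((k + 1) * |y|) := by
        rw [show (k + 1) * |y| = k * |y| + |y| by ring, exp_add]; ring

lemma hasDerivAt_integral_mul_q {v : ℝ} (hv : 0 < v) {f : ℝ → ℝ} (hf : Continuous f) {C k : ℝ}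
    (hgrowth : ∀ y, |f y| ≤ C * exp (k * |y|)) (m : ℝ) :
    HasDerivAt (fun x => ∫ y, f y * q v x y) (∫ y, f y * ((y - m) / v * q v m y)) m := by
  have hball : ∀ x ∈ Metric.ball m 1, |x| ≤ |m| + 1 := fun x hx => by
    have := abs_sub_abs_le_abs_sub x m
    rw [Metric.mem_ball, Real.dist_eq] at hx
    linarith
  obtain ⟨D₀, hD₀⟩ := exists_abs_mul_q_le hv (g := fun _ y => f y) (R := |m| + 1)
    fun _ y _ => hgrowth y
  obtain ⟨D₁, hD₁⟩ := exists_abs_mul_deriv_q_le hv hgrowth (|m| + 1)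
  have hint (D : ℝ) : Integrable fun y => D * exp (-(8 * v)⁻¹ * y ^ 2) :=
    (integrable_exp_neg_mul_sq (by positivity)).const_mul D
  exact (hasDerivAt_integral_of_dominated_loc_of_deriv_le (Metric.ball_mem_nhds m one_pos)
    (Eventually.of_forall fun x => (hf.mul (continuous_q v x)).aestronglyMeasurable)
    ((hint D₀).mono' (hf.mul (continuous_q v m)).aestronglyMeasurable
      (ae_of_all _ fun y => hD₀ m y (by linarith)))
    ((hf.mul ((continuous_id.sub continuous_const).div_const v |>.mul
      (continuous_q v m))).aestronglyMeasurable)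
    (ae_of_all _ fun y x hx => hD₁ x y (hball x hx))
    (hint D₁)
    (ae_of_all _ fun y x _ => (hasDerivAt_q_fst v x y).const_mul (f y))).2

lemma integrable_deriv_mul_q_and_integral_eq {v : ℝ} (hv : 0 < v) {f f' : ℝ → ℝ}
    (hf : ∀ y, HasDerivAt f (f' y) y) (hf' : ∀ y, 0 ≤ f' y) {C k : ℝ}
    (hgrowth : ∀ y, |f y| ≤ C * exp (k * |y|)) (m : ℝ) :
    Integrable (fun y => f' y * q v m y) ∧
      ∫ y, f' y * q v m y = ∫ y, f y * ((y - m) / v * q v m y) := by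
  set g := fun y => f y * ((y - m) / v * q v m y)
  have hgc : Continuous g :=
    (continuous_iff_continuousAt.2 fun y => (hf y).continuousAt).mul
      ((continuous_id.sub continuous_const).div_const v |>.mul (continuous_q v m))
  have hg : Integrable g := by
    obtain ⟨D, hD⟩ := exists_abs_mul_deriv_q_le hv hgrowth |m|
    exact ((integrable_exp_neg_mul_sq (by positivity)).const_mul D).mono' hgc.aestronglyMeasurable
      (ae_of_all _ fun y => hD m y le_rfl)
  -- `f q + ∫₀ʸ g` is a primitive of `f' q`, since `∂_y q = -(y - m) / v * q`
  set H := fun y => f y * q v m y + ∫ t in 0..y, g t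
  have hH : ∀ y, HasDerivAt H (f' y * q v m y) y := fun y => by
    refine (((hf y).mul (hasDerivAt_q_snd v m y)).add
      (hgc.integral_hasStrictDerivAt 0 y).hasDerivAt).congr_deriv ?_
    simp only [g]; ring
  have hbot : Tendsto H atBot (𝓝 (0 + -∫ t in Iic 0, g t)) := by
    refine ((tendsto_mul_q_cocompact hv hgrowth m).mono_left atBot_le_cocompact).add ?_
    simpa only [intervalIntegral.integral_symm 0, neg_neg, id] using
      (intervalIntegral_tendsto_integral_Iic 0 hg.integrableOn tendsto_id).neg
  have htop : Tendsto H atTop (𝓝 (0 + ∫ t in Ioi 0, g t)) :=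
    ((tendsto_mul_q_cocompact hv hgrowth m).mono_left atTop_le_cocompact).add
      (intervalIntegral_tendsto_integral_Ioi 0 hg.integrableOn tendsto_id)
  have hint := integrable_deriv_of_nonneg_of_tendsto hH
    (fun y => mul_nonneg (hf' y) (q_pos hv m y).le) hbot htop
  refine ⟨hint, ?_⟩
  rw [integral_of_hasDerivAt_of_tendsto hH hint hbot htop,
    ← intervalIntegral.integral_Iic_add_Ioi hg.integrableOn hg.integrableOn]
  ring

lemma integral_deriv_mul_q_pos {v : ℝ} (hv : 0 < v) {f f' : ℝ → ℝ}
    (hf : ∀ y, HasDerivAt f (f' y) y) (hf' : ∀ y, 0 ≤ f' y) {a b : ℝ} (hab : f a ≠ f b) (m : ℝ)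
    (hint : Integrable (fun y => f' y * q v m y)) : 0 < ∫ y, f' y * q v m y := by
  rw [integral_pos_iff_support_of_nonneg (fun y => mul_nonneg (hf' y) (q_pos hv m y).le) hint]
  have hsupp : Function.support (fun y => f' y * q v m y) = Function.support f' := by
    ext y; simp [(q_pos hv m y).ne']
  rw [hsupp, pos_iff_ne_zero]
  intro h0
  have hae : ∀ᵐ y, f' y = 0 := ae_iff.2 h0
  have hFTC := intervalIntegral.integral_eq_sub_of_hasDerivAt (a := a) (b := b) (fun y _ => hf y)
    ((integrable_zero ℝ ℝ volume).congr (hae.mono fun y hy => hy.symm)).intervalIntegrable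
  rw [intervalIntegral.integral_congr_ae (g := fun _ => 0) (hae.mono fun y hy _ => hy),
    intervalIntegral.integral_zero] at hFTC
  exact hab (sub_eq_zero.1 hFTC.symm).symm

theorem stmt_16_general
    (f f' : ℝ → ℝ)
    (hf : ∀ y : ℝ, HasDerivAt f (f' y) y)
    (hf_mono : StrictMono f)
    (k₁ k₂ : ℝ)
    (hgrowth : ∀ y : ℝ, |f y| ≤ k₁ * Real.exp (k₂ * |y|))
    (v : ℝ) (hv : 0 < v)
    (F : ℝ → ℝ) (hF : ∀ m : ℝ, F m = ∫ y : ℝ, f y * q v m y) :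
    (∀ m : ℝ, HasDerivAt F (∫ y : ℝ, f' y * q v m y) m
      ∧ 0 < ∫ y : ℝ, f' y * q v m y)
    ∧ StrictMono F := by
  have hf' : ∀ y, 0 ≤ f' y := fun y => (hf y).deriv ▸ hf_mono.monotone.deriv_nonneg
  have hF' : ∀ m, HasDerivAt F (∫ y, f' y * q v m y) m ∧ 0 < ∫ y, f' y * q v m y := fun m => by
    obtain ⟨hint, hIBP⟩ := integrable_deriv_mul_q_and_integral_eq hv hf hf' hgrowth m
    refine ⟨?_, integral_deriv_mul_q_pos hv hf hf' (hf_mono zero_lt_one).ne m hint⟩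
    rw [funext hF, hIBP]
    exact hasDerivAt_integral_mul_q hv
      (continuous_iff_continuousAt.2 fun y => (hf y).continuousAt) hgrowth m
  exact ⟨hF', strictMono_of_hasDerivAt_pos (fun m => (hF' m).1) fun m => (hF' m).2⟩

/-- Let `f` be `C¹` and strictly increasing with
`|f(y)| ≤ k₁ e^{k₂ |y|}`, and fix `v > 0`. Then `F(m) := ∫ f(y) q(v,m,y) dy` is
differentiable with `F'(m) = ∫ f'(y) q(v,m,y) dy > 0`; in particular `F` is
strictly increasing. -/
theorem stmt_16
    (f f' : ℝ → ℝ)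
    (hf : ∀ y : ℝ, HasDerivAt f (f' y) y) (hf'_cont : Continuous f')
    (hf_mono : StrictMono f)
    (k₁ k₂ : ℝ) (hk₁ : 0 < k₁) (hk₂ : 0 < k₂)
    (hgrowth : ∀ y : ℝ, |f y| ≤ k₁ * Real.exp (k₂ * |y|))
    (v : ℝ) (hv : 0 < v)
    (F : ℝ → ℝ) (hF : ∀ m : ℝ, F m = ∫ y : ℝ, f y * q v m y) :
    (∀ m : ℝ, HasDerivAt F (∫ y : ℝ, f' y * q v m y) m
      ∧ 0 < ∫ y : ℝ, f' y * q v m y)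
    ∧ StrictMono F :=
  stmt_16_general f f' hf hf_mono k₁ k₂ hgrowth v hv F hF
end
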